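/- Every hereditarily irresolvable topological space is T_D, i.e., the derived set of every singleton is closed. -/
import Mathlib


/-- Modal formulas: variables, ⊤, ¬, ∧, □. -/
inductive Fml : Type
  | var : ℕ → Fml
  | top : Fml
  | neg : Fml → Fml
  | and : Fml → Fml → Fml
  | box : Fml → Fml
deriving DecidableEq

namespace Fml
/-- Material implication, defined from ¬ and ∧. -/
def imp (φ ψ : Fml) : Fml := .neg (.and φ (.neg ψ))
/-- Disjunction. -/
def or (φ ψ : Fml) : Fml := .neg (.and (.neg φ) (.neg ψ))
/-- ◇φ := ¬□¬φ. -/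
def dia (φ : Fml) : Fml := .neg (.box (.neg φ))
/-- □*φ := φ ∧ □φ. -/
def boxs (φ : Fml) : Fml := .and φ (.box φ)
/-- ◇*φ := φ ∨ ◇φ. -/
def dias (φ : Fml) : Fml := Fml.or φ (dia φ)
end Fml

/-- Kripke satisfaction. -/
def sat {W : Type} (R : W → W → Prop) (V : ℕ → Set W) : W → Fml → Prop
  | x, .var p => x ∈ V p
  | _, .top => True
  | x, .neg φ => ¬ sat R V x φ
  | x, .and φ ψ => sat R V x φ ∧ sat R V x ψ
  | x, .box φ => ∀ y, R x y → sat R V y φ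

/-- P_n(φ0; φ1,...,φn): P_0(φ0) = ◇φ0, P_n(φ0,φ1,...,φn) = ◇(φ1 ∧ P_{n-1}(φ0,φ2,...,φn)). -/
def Pfml (φ0 : Fml) : List Fml → Fml
  | [] => φ0.dia
  | ψ :: rest => (Fml.and ψ (Pfml φ0 rest)).dia

/-- Conjunction of ¬(φ ∧ ψ) for ψ in the list. -/
def conjNeg (φ : Fml) : List Fml → Fml
  | [] => .top
  | ψ :: rest => .and (.neg (.and φ ψ)) (conjNeg φ rest)

/-- D_n: pairwise disjointness conjunction ⋀_{i<j} ¬(φ_i ∧ φ_j). -/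
def Dfml : List Fml → Fml
  | [] => .top
  | φ :: rest => .and (conjNeg φ rest) (Dfml rest)

/-- The scheme C_n instance on φ0,φ1,...,φn (φs = [φ1,...,φn]). -/
def Cfml (φ0 : Fml) (φs : List Fml) : Fml :=
  ((Dfml (φ0 :: φs)).boxs).imp ((φ0.dia).imp ((Fml.and φ0 (Fml.neg (Pfml φ0 φs))).dia))

/-- The scheme C_n* instance: as C_n but with ◇* in the consequent. -/
def CfmlStar (φ0 : Fml) (φs : List Fml) : Fml :=
  ((Dfml (φ0 :: φs)).boxs).imp ((φ0.dia).imp ((Fml.and φ0 (Fml.neg (Pfml φ0 φs))).dias))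

/-- An ascending R-chain. -/
def AscChain {W : Type} (R : W → W → Prop) (x : ℕ → W) : Prop := ∀ m, R (x m) (x (m+1))

/-- A strictly ascending R-chain. -/
def StrictAscChain {W : Type} (R : W → W → Prop) (x : ℕ → W) : Prop :=
  AscChain R x ∧ ∀ m, ¬ R (x (m+1)) (x m)

/-- The R-cluster of x. -/
def cluster {W : Type} (R : W → W → Prop) (x : W) : Set W := {y | x = y ∨ (R x y ∧ R y x)}

/-- The frame has a cycle of length k (k ≥ 1): k distinct points x_0 R x_1 R ... R x_{k-1} R x_0. -/
def HasCycle {W : Type} (R : W → W → Prop) (k : ℕ) : Prop :=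
  1 ≤ k ∧ ∃ x : ℕ → W, (∀ i j, i < k → j < k → x i = x j → i = j) ∧
    ∀ i < k, R (x i) (x ((i+1) % k))

/-- Circumference at most n: every cycle has length ≤ n. -/
def CircumLE {W : Type} (R : W → W → Prop) (n : ℕ) : Prop := ∀ k, HasCycle R k → k ≤ n

/-- The frame (W,R) validates the scheme C_n. -/
def ValidatesCn {W : Type} (R : W → W → Prop) (n : ℕ) : Prop :=
  ∀ (V : ℕ → Set W) (x : W) (φ0 : Fml) (φs : List Fml), φs.length = n →
    sat R V x (Cfml φ0 φs)

/-- A Boolean valuation on formulas (box-formulas and variables as atoms). -/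
def BoolEval (w : Fml → Bool) : Prop :=
  w .top = true ∧ (∀ φ, w (.neg φ) = !w φ) ∧ (∀ φ ψ, w (.and φ ψ) = (w φ && w ψ))

/-- Propositional tautologies. -/
def Tautology (φ : Fml) : Prop := ∀ w, BoolEval w → w φ = true

/-- Theorems of the smallest normal modal logic containing the axiom set Ax. -/
inductive Prov (Ax : Set Fml) : Fml → Prop
  | taut {φ} : Tautology φ → Prov Ax φ
  | kax (φ ψ) : Prov Ax ((Fml.box (φ.imp ψ)).imp ((Fml.box φ).imp (Fml.box ψ)))
  | ax {φ} : φ ∈ Ax → Prov Ax φ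
  | mp {φ ψ} : Prov Ax (φ.imp ψ) → Prov Ax φ → Prov Ax ψ
  | nec {φ} : Prov Ax φ → Prov Ax (.box φ)

/-- All instances of the transitivity scheme 4. -/
def Ax4 : Set Fml := {χ | ∃ φ, χ = (Fml.box φ).imp (Fml.box (Fml.box φ))}

/-- Axioms of K4C_n: scheme 4 together with all instances of scheme C_n. -/
def AxK4C (n : ℕ) : Set Fml :=
  Ax4 ∪ {χ | ∃ (φ0 : Fml) (φs : List Fml), φs.length = n ∧ χ = Cfml φ0 φs}

/-- X is hereditarily m-irresolvable: no nonempty subspace has m pairwise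
disjoint subsets each dense in the subspace. -/
def HeredIrres (X : Type) [TopologicalSpace X] (m : ℕ) : Prop :=
  ∀ S : Set X, S.Nonempty →
    ¬ ∃ D : Fin m → Set X, (∀ i, D i ⊆ S) ∧ (∀ i j, i ≠ j → Disjoint (D i) (D j)) ∧
      ∀ i, S ⊆ closure (D i)

/-- C-semantics truth sets: □ is interior (hence ◇ is closure). -/
def csat {X : Type} [TopologicalSpace X] (V : ℕ → Set X) : Fml → Set X
  | .var p => V p
  | .top => Set.univ
  | .neg φ => (csat V φ)ᶜ
  | .and φ ψ => csat V φ ∩ csat V ψ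
  | .box φ => interior (csat V φ)

/-- The derived set: set of limit points of Y. -/
def dset {X : Type} [TopologicalSpace X] (Y : Set X) : Set X := {x | x ∈ closure (Y \ {x})}

/-- d-semantics truth sets: ◇ is the derived-set operator. -/
def dsat {X : Type} [TopologicalSpace X] (V : ℕ → Set X) : Fml → Set X
  | .var p => V p
  | .top => Set.univ
  | .neg φ => (dsat V φ)ᶜ
  | .and φ ψ => dsat V φ ∩ dsat V ψ
  | .box φ => (dset ((dsat V φ)ᶜ))ᶜ

/-- The Alexandroff topology of a frame: open sets are the R-up-sets. -/
def alexTop {W : Type} (R : W → W → Prop) : TopologicalSpace W where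
  IsOpen O := ∀ x ∈ O, ∀ y, R x y → y ∈ O
  isOpen_univ := by intro x _ y _; trivial
  isOpen_inter := by intro s t hs ht x hx y hR; exact ⟨hs x hx.1 y hR, ht x hx.2 y hR⟩
  isOpen_sUnion := by
    intro S hS x hx y hR
    obtain ⟨t, htS, hxt⟩ := hx
    exact ⟨t, htS, hS t htS x hxt y hR⟩

/-- every hereditarily irresolvable space is T_D: the derived set of
every singleton is closed. -/
theorem stmt17 {X : Type} [TopologicalSpace X] (h : HeredIrres X 2) :
    ∀ x : X, IsClosed (dset ({x} : Set X)) := by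
  intro x
  have hd : dset ({x} : Set X) = closure {x} \ {x} := by
    ext y
    simp only [dset, Set.mem_setOf_eq, Set.mem_diff, Set.mem_singleton_iff]
    constructor
    · intro hy
      refine ⟨closure_mono Set.diff_subset hy, ?_⟩
      rintro rfl
      simp at hy
    · rintro ⟨h1, h2⟩
      have he : ({x} : Set X) \ {y} = {x} := by
        ext z
        simp only [Set.mem_diff, Set.mem_singleton_iff, and_iff_left_iff_imp]
        rintro rfl
        exact fun hz => h2 hz.symm
      rw [he]; exact h1
  rw [hd]
  rw [← closure_subset_iff_isClosed]
  intro y hy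
  have hy1 : y ∈ closure ({x} : Set X) := by
    have := closure_mono (Set.diff_subset (s := closure ({x} : Set X)) (t := {x}))
    simpa [closure_closure] using this hy
  refine ⟨hy1, ?_⟩
  rintro rfl
  exfalso
  apply h (closure {y}) ⟨y, subset_closure rfl⟩
  refine ⟨![{y}, closure {y} \ {y}], ?_, ?_, ?_⟩
  · intro i
    fin_cases i
    · simpa using subset_closure (s := ({y} : Set X))
    · simp
  · intro i j hij
    fin_cases i <;> fin_cases j <;> simp_all
  · intro i
    fin_cases i
    · simp
    · simp only [Matrix.cons_val_one, Matrix.head_cons]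
      intro z hz
      rcases eq_or_ne z y with rfl | hne
      · exact hy
      · exact subset_closure ⟨hz, hne⟩
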